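/- Let Θ : A* → A* be an involutive antimorphism and let u ∈ A^ℕ be a uniformly recurrent infinite word whose language is closed under Θ. Then u has finite Θ-palindromic defect if and only if there exists a positive integer H such that for every factor w of u with |w| > H, the longest Θ-palindromic suffix of w is unioccurrent in w (occurs exactly once in w). -/

import Mathlib

/-!
Basic notions from combinatorics on words: involutive antimorphisms,
Θ-palindromes, factors of infinite words, palindromic defect, richness.
-/

/-- `Θ` is an involutive antimorphism of the free monoid `A*` (words as lists). -/
def IsAntimorphism {A : Type*} (Θ : List A → List A) : Prop :=
  (∀ x y : List A, Θ (x ++ y) = Θ y ++ Θ x) ∧ ∀ x : List A, Θ (Θ x) = x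

/-- The factor `u_i u_{i+1} … u_{i+n-1}` of the infinite word `u`. -/
def factorAt {A : Type*} (u : ℕ → A) (i n : ℕ) : List A :=
  (List.range n).map fun k => u (i + k)

/-- `i` is an occurrence of `w` in the infinite word `u`. -/
def OccursAt {A : Type*} (u : ℕ → A) (w : List A) (i : ℕ) : Prop :=
  w = factorAt u i w.length

/-- `w` is a factor of the infinite word `u`. -/
def IsFactorOf {A : Type*} (w : List A) (u : ℕ → A) : Prop :=
  ∃ i, OccursAt u w i

/-- The prefix of length `n` of the infinite word `u`. -/
def prefixWord {A : Type*} (u : ℕ → A) (n : ℕ) : List A :=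
  factorAt u 0 n

/-- `u` is recurrent: every factor has infinitely many occurrences. -/
def Recurrent {A : Type*} (u : ℕ → A) : Prop :=
  ∀ w, IsFactorOf w u → ∀ N, ∃ i, N ≤ i ∧ OccursAt u w i

/-- `u` is uniformly recurrent: every factor occurs with bounded gaps
(equivalently, every factor has finitely many return words). -/
def UniformlyRecurrent {A : Type*} (u : ℕ → A) : Prop :=
  ∀ w, IsFactorOf w u → ∃ R, ∀ N, ∃ i, N ≤ i ∧ i < N + R ∧ OccursAt u w i

/-- `i` is an occurrence of the word `s` in the finite word `r`. -/
def OccursIn {A : Type*} (s r : List A) (i : ℕ) : Prop :=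
  i + s.length ≤ r.length ∧ s = (r.drop i).take s.length

/-- `s` occurs exactly once in `r`. -/
def Unioccurrent {A : Type*} (s r : List A) : Prop :=
  Set.ncard {i | OccursIn s r i} = 1

/-- The set `Pal_Θ(w)` of `Θ`-palindromic factors of the finite word `w`
(the empty word included). -/
def palSet {A : Type*} (Θ : List A → List A) (w : List A) : Set (List A) :=
  {p | p <:+: w ∧ Θ p = p}

/-- `γ_Θ(w)`: the number of pairs `{a, Θ(a)}` where `a` is a letter occurring
in `w` with `a ≠ Θ(a)`. -/
noncomputable def gammaTheta {A : Type*} (Θ : List A → List A) (w : List A) : ℕ :=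
  Set.ncard {P : Set A | ∃ a, a ∈ w ∧ Θ [a] ≠ [a] ∧ P = {b | [b] = [a] ∨ [b] = Θ [a]}}

/-- The `Θ`-palindromic defect `D_Θ(w) = |w| + 1 - γ_Θ(w) - #Pal_Θ(w)` of a finite word. -/
noncomputable def defect {A : Type*} (Θ : List A → List A) (w : List A) : ℤ :=
  (w.length : ℤ) + 1 - gammaTheta Θ w - (palSet Θ w).ncard

/-- The infinite word `u` has finite `Θ`-palindromic defect
(`D_Θ(u) = sup { D_Θ(w) : w factor of u } < ∞`), i.e. `u` is almost `Θ`-rich. -/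
def FiniteDefect {A : Type*} (Θ : List A → List A) (u : ℕ → A) : Prop :=
  ∃ C : ℤ, ∀ w, IsFactorOf w u → defect Θ w ≤ C

/-- The infinite word `u` is `Θ`-rich: every factor `w` satisfies
`#Pal_Θ(w) = |w| + 1 - γ_Θ(w)`, i.e. has zero `Θ`-defect. -/
def RichWord {A : Type*} (Θ : List A → List A) (u : ℕ → A) : Prop :=
  ∀ w, IsFactorOf w u → defect Θ w = 0

/-- The language of `u` is closed under `Θ`. -/
def LangClosedUnder {A : Type*} (Θ : List A → List A) (u : ℕ → A) : Prop :=
  ∀ w, IsFactorOf w u → IsFactorOf (Θ w) u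

/-- `u` is the image of the infinite word `v` under the monoid morphism
`B* → A*` determined by `φ` on letters, i.e. `u = φ(v₀)φ(v₁)φ(v₂)…`. -/
def IsMorphicImage {A B : Type*} (u : ℕ → A) (φ : B → List A) (v : ℕ → B) : Prop :=
  (∀ n, OccursAt u ((prefixWord v n).flatMap φ) 0) ∧
    ∀ N, ∃ n, N ≤ ((prefixWord v n).flatMap φ).length

/-- The occurrences of `w` and `w'` in `u` alternate: listing in increasing order
all occurrences of `w` or `w'`, consecutive indices are alternately occurrences
of `w` and of `w'` (between two occurrences of one of them, the second of which is
not an occurrence of the other, there is an occurrence of the other). -/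
def AlternateIn {A : Type*} (u : ℕ → A) (w w' : List A) : Prop :=
  (∀ i j, i < j → OccursAt u w i → OccursAt u w j → ¬ OccursAt u w' j →
    ∃ k, i < k ∧ k < j ∧ OccursAt u w' k) ∧
  (∀ i j, i < j → OccursAt u w' i → OccursAt u w' j → ¬ OccursAt u w j →
    ∃ k, i < k ∧ k < j ∧ OccursAt u w k)

/-- Factor complexity `C(n)` of the infinite word `u`. -/
noncomputable def complexity {A : Type*} (u : ℕ → A) (n : ℕ) : ℕ :=
  Set.ncard {w : List A | IsFactorOf w u ∧ w.length = n}

/-- `Θ`-palindromic complexity `P_Θ(n)` of the infinite word `u`. -/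
noncomputable def palComplexity {A : Type*} (Θ : List A → List A) (u : ℕ → A) (n : ℕ) : ℕ :=
  Set.ncard {w : List A | IsFactorOf w u ∧ w.length = n ∧ Θ w = w}

/-- `r` is a complete return word of `w` in `u`: a factor of `u` with exactly two
occurrences of `w`, one as a prefix and one as a suffix. -/
def IsCompleteReturnWord {A : Type*} (u : ℕ → A) (w r : List A) : Prop :=
  IsFactorOf r u ∧ w <+: r ∧ w <:+ r ∧ Set.ncard {i | OccursIn w r i} = 2

section Chunk1
open List
variable {A : Type*}

lemma infix_of_occursIn {s r : List A} {i : ℕ} (h : OccursIn s r i) : s <:+: r := by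
  obtain ⟨h1, h2⟩ := h
  refine ⟨r.take i, r.drop (i + s.length), ?_⟩
  conv_rhs => rw [← List.take_append_drop i r]
  rw [List.append_assoc]
  congr 1
  rw [h2]
  have h3 : (List.take s.length (List.drop i r)).length = s.length := by simp; omega
  rw [h3, ← List.drop_drop, List.take_append_drop]

lemma occursIn_of_infix {s r : List A} (h : s <:+: r) : ∃ i, OccursIn s r i := by
  obtain ⟨x, y, hxy⟩ := h
  refine ⟨x.length, ?_, ?_⟩
  · rw [← hxy]; simp
  · rw [← hxy, List.append_assoc, List.drop_left, List.take_left]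

lemma occursIn_suffix {s r : List A} (h : s <:+ r) : OccursIn s r (r.length - s.length) := by
  obtain ⟨t, ht⟩ := h
  have hl : t.length + s.length = r.length := by rw [← ht]; simp
  constructor
  · omega
  · have : r.length - s.length = t.length := by omega
    rw [this, ← ht, List.drop_left, List.take_of_length_le le_rfl]

lemma suffix_eq_drop {s r : List A} (h : s <:+ r) : s = r.drop (r.length - s.length) := by
  obtain ⟨t, ht⟩ := h
  have hl : t.length + s.length = r.length := by rw [← ht]; simp
  have : r.length - s.length = t.length := by omega
  rw [this, ← ht, List.drop_left]

lemma suffix_eq_of_length {s t r : List A} (hs : s <:+ r) (ht : t <:+ r)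
    (h : s.length = t.length) : s = t := by
  rw [suffix_eq_drop hs, suffix_eq_drop ht, h]

lemma suffix_of_suffix_length_le {s t r : List A} (hs : s <:+ r) (ht : t <:+ r)
    (h : s.length ≤ t.length) : s <:+ t := by
  rcases List.suffix_or_suffix_of_suffix hs ht with h1 | h1
  · exact h1
  · have := suffix_eq_of_length ht hs (le_antisymm h (h1.length_le)).symm
    rw [this]

lemma occursIn_finite (s r : List A) : {i | OccursIn s r i}.Finite := by
  apply (Set.finite_Iic r.length).subset
  intro i hi
  simp only [Set.mem_Iic]
  have := hi.1; omega

end Chunk1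
section Chunk2
open List
variable {A : Type*} {Θ : List A → List A}

lemma theta_nil (hΘ : IsAntimorphism Θ) : Θ [] = [] := by
  have h := hΘ.1 [] []
  simp only [List.append_nil] at h
  have : (Θ ([] : List A)).length = (Θ ([] : List A)).length + (Θ ([] : List A)).length := by
    conv_lhs => rw [h]
    simp
  have h0 : (Θ ([] : List A)).length = 0 := by omega
  exact List.eq_nil_of_length_eq_zero h0

lemma theta_singleton_ne_nil (hΘ : IsAntimorphism Θ) (a : A) : Θ [a] ≠ [] := by
  intro h
  have := hΘ.2 [a]
  rw [h, theta_nil hΘ] at this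
  exact List.cons_ne_nil a [] this.symm

lemma theta_length_ge (hΘ : IsAntimorphism Θ) : ∀ l : List A, l.length ≤ (Θ l).length := by
  intro l
  induction l with
  | nil => simp
  | cons a t ih =>
    have h : Θ (a :: t) = Θ t ++ Θ [a] := by
      have := hΘ.1 [a] t
      simpa using this
    rw [h, List.length_append, List.length_cons]
    have h1 : 1 ≤ (Θ [a]).length := by
      rcases Nat.eq_zero_or_pos (Θ [a]).length with h0 | h0
      · exact absurd (List.eq_nil_of_length_eq_zero h0) (theta_singleton_ne_nil hΘ a)
      · exact h0
    omega

lemma theta_length (hΘ : IsAntimorphism Θ) (l : List A) : (Θ l).length = l.length := by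
  have h1 := theta_length_ge hΘ l
  have h2 := theta_length_ge hΘ (Θ l)
  rw [hΘ.2 l] at h2
  omega

lemma exists_invol (hΘ : IsAntimorphism Θ) :
    ∃ θ : A → A, (∀ a, θ (θ a) = a) ∧ ∀ a, Θ [a] = [θ a] := by
  have h1 : ∀ a : A, ∃ b, Θ [a] = [b] := by
    intro a
    have := theta_length hΘ [a]
    exact List.length_eq_one_iff.mp (by simpa using this)
  choose θ hθ using h1
  refine ⟨θ, fun a => ?_, hθ⟩
  have := hθ (θ a)
  rw [← hθ a, hΘ.2 [a]] at this
  exact (List.cons_eq_cons.mp this.symm).1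

lemma theta_infix (hΘ : IsAntimorphism Θ) {v w : List A} (h : v <:+: w) : Θ v <:+: Θ w := by
  obtain ⟨x, y, hxy⟩ := h
  refine ⟨Θ y, Θ x, ?_⟩
  rw [← hxy, hΘ.1 (x ++ v) y, hΘ.1 x v, List.append_assoc]

lemma singleton_infix_iff {a : A} {l : List A} : [a] <:+: l ↔ a ∈ l := by
  constructor
  · intro h; exact h.subset (List.mem_singleton_self a)
  · intro h
    obtain ⟨s, t, hst⟩ := List.append_of_mem h
    exact ⟨s, t, by rw [hst]; simp⟩

lemma mem_theta_iff (hΘ : IsAntimorphism Θ) {θ : A → A} (hθ : ∀ a, Θ [a] = [θ a])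
    (hinv : ∀ a, θ (θ a) = a) {a : A} {w : List A} : a ∈ Θ w ↔ θ a ∈ w := by
  constructor
  · intro h
    have h2 : Θ [a] <:+: Θ (Θ w) := theta_infix hΘ (singleton_infix_iff.mpr h)
    rw [hΘ.2, hθ] at h2
    exact singleton_infix_iff.mp h2
  · intro h
    have h2 : Θ [θ a] <:+: Θ w := theta_infix hΘ (singleton_infix_iff.mpr h)
    rw [hθ (θ a), hinv] at h2
    exact singleton_infix_iff.mp h2

end Chunk2
/-- The set of palindromic pairs used in `gammaTheta`. -/
def pairSet {A : Type*} (Θ : List A → List A) (w : List A) : Set (Set A) :=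
  {P : Set A | ∃ a, a ∈ w ∧ Θ [a] ≠ [a] ∧ P = {b | [b] = [a] ∨ [b] = Θ [a]}}

section Chunk3
open List
variable {A : Type*} {Θ : List A → List A}

lemma gammaTheta_eq (Θ : List A → List A) (w : List A) :
    gammaTheta Θ w = (pairSet Θ w).ncard := rfl

lemma palSet_finite (Θ : List A → List A) (w : List A) : (palSet Θ w).Finite := by
  apply (List.finite_toSet w.sublists).subset
  intro p hp
  simpa using List.mem_sublists.mpr hp.1.sublist

lemma pairSet_finite (Θ : List A → List A) (w : List A) : (pairSet Θ w).Finite := by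
  apply Set.Finite.subset (Set.Finite.image (fun a => {b | [b] = [a] ∨ [b] = Θ [a]})
    (List.finite_toSet w))
  rintro P ⟨a, ha, -, rfl⟩
  exact ⟨a, ha, rfl⟩

lemma palSet_mono {v w : List A} (h : v <:+: w) : palSet Θ v ⊆ palSet Θ w :=
  fun p hp => ⟨hp.1.trans h, hp.2⟩

lemma pairSet_mono {v w : List A} (h : v <:+: w) : pairSet Θ v ⊆ pairSet Θ w := by
  rintro P ⟨a, ha, h1, rfl⟩
  exact ⟨a, h.subset ha, h1, rfl⟩

lemma nil_mem_palSet (hΘ : IsAntimorphism Θ) (w : List A) : [] ∈ palSet Θ w :=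
  ⟨List.nil_infix, theta_nil hΘ⟩

lemma palSet_nil (hΘ : IsAntimorphism Θ) : palSet Θ ([] : List A) = {[]} := by
  ext p
  simp only [palSet, Set.mem_setOf_eq, Set.mem_singleton_iff]
  constructor
  · rintro ⟨h1, -⟩; exact List.eq_nil_of_infix_nil h1
  · rintro rfl; exact ⟨List.infix_rfl, theta_nil hΘ⟩

lemma pairSet_nil : pairSet Θ ([] : List A) = ∅ := by
  ext P; simp [pairSet]

lemma defect_nil (hΘ : IsAntimorphism Θ) : defect Θ ([] : List A) = 0 := by
  rw [defect, gammaTheta_eq, palSet_nil hΘ, pairSet_nil]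
  simp

lemma gamma_mono (Θ : List A → List A) {v w : List A} (h : v <:+: w) :
    gammaTheta Θ v ≤ gammaTheta Θ w := by
  rw [gammaTheta_eq, gammaTheta_eq]
  exact Set.ncard_le_ncard (pairSet_mono h) (pairSet_finite Θ w)

lemma exists_maximal_pal_suffix (hΘ : IsAntimorphism Θ) (w : List A) :
    ∃ s, s <:+ w ∧ Θ s = s ∧ ∀ t, t <:+ w → Θ t = t → t.length ≤ s.length := by
  classical
  set P : ℕ → Prop := fun k => ∃ s : List A, s <:+ w ∧ Θ s = s ∧ s.length = k with hP
  have h0 : P 0 := ⟨[], List.nil_suffix, theta_nil hΘ, rfl⟩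
  obtain ⟨s, hs1, hs2, hs3⟩ := Nat.findGreatest_spec (Nat.zero_le w.length) h0
  refine ⟨s, hs1, hs2, fun t ht1 ht2 => ?_⟩
  rw [hs3]
  exact Nat.le_findGreatest ht1.length_le ⟨t, ht1, ht2, rfl⟩

end Chunk3
section Chunk4
open List
variable {A : Type*} {Θ : List A → List A}

lemma occursIn_prefix {p v t : List A} {i : ℕ} (h : OccursIn p v i) :
    OccursIn p (v ++ t) i := by
  obtain ⟨h1, h2⟩ := h
  constructor
  · simp only [List.length_append]; omega
  · rw [List.drop_append_of_le_length (by omega), List.take_append_of_le_length (by simp; omega)]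
    exact h2

lemma occursIn_restrict {p v : List A} {a : A} {i : ℕ}
    (h : OccursIn p (v ++ [a]) i) (hle : i + p.length ≤ v.length) : OccursIn p v i := by
  obtain ⟨h1, h2⟩ := h
  refine ⟨hle, ?_⟩
  rw [List.drop_append_of_le_length (by omega), List.take_append_of_le_length (by simp; omega)]
    at h2
  exact h2

lemma newpal (hΘ : IsAntimorphism Θ) {v p : List A} {a : A}
    (hp : p ∈ palSet Θ (v ++ [a])) (hpv : p ∉ palSet Θ v) :
    p <:+ (v ++ [a]) ∧ p ≠ [] ∧
      {i | OccursIn p (v ++ [a]) i} = {(v ++ [a]).length - p.length} ∧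
      ∀ t, t <:+ (v ++ [a]) → Θ t = t → t.length ≤ p.length := by
  set w := v ++ [a] with hw
  have hlw : w.length = v.length + 1 := by simp [hw]
  -- every occurrence ends at the end
  have hocc : ∀ i, OccursIn p w i → i + p.length = w.length := by
    intro i hi
    by_contra hne
    have hle : i + p.length ≤ v.length := by
      have := hi.1; omega
    exact hpv ⟨infix_of_occursIn (occursIn_restrict hi hle), hp.2⟩
  -- p is a suffix
  obtain ⟨i0, hi0⟩ := occursIn_of_infix hp.1
  have hi0e : i0 = w.length - p.length := by have := hocc i0 hi0; omega
  have hplen : p.length ≤ w.length := by have := hi0.1; omega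
  have hsuf : p <:+ w := by
    have hd : p = w.drop i0 := by
      have h2 := hi0.2
      rwa [List.take_of_length_le (by simp; have := hocc i0 hi0; omega)] at h2
    exact ⟨w.take i0, by rw [hd]; exact List.take_append_drop i0 w⟩
  have hne : p ≠ [] := by
    rintro rfl
    exact hpv (nil_mem_palSet hΘ v)
  refine ⟨hsuf, hne, ?_, ?_⟩
  · ext i
    simp only [Set.mem_setOf_eq, Set.mem_singleton_iff]
    constructor
    · intro hi; have := hocc i hi; have := hi.1; omega
    · rintro rfl
      exact occursIn_suffix hsuf
  · intro t ht hpal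
    by_contra hlt
    push_neg at hlt
    have hpt : p <:+ t := List.suffix_of_suffix_length_le hsuf ht (le_of_lt hlt)
    obtain ⟨x, hx⟩ := hpt
    have hxne : x.length ≠ 0 := by
      intro h0
      rw [List.eq_nil_of_length_eq_zero h0] at hx
      simp at hx
      rw [hx] at hlt
      exact lt_irrefl _ hlt
    have htp : t = p ++ Θ x := by
      conv_lhs => rw [← hpal, ← hx, hΘ.1 x p, hp.2]
    have hocc2 : OccursIn p w (w.length - t.length) := by
      have htl : t.length ≤ w.length := ht.length_le
      refine ⟨by omega, ?_⟩
      rw [← suffix_eq_drop ht, htp, List.take_left]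
    have := hocc _ hocc2
    have htl : t.length ≤ w.length := ht.length_le
    have hxl : t.length = p.length + x.length := by rw [← hx]; simp; omega
    omega

end Chunk4
section Chunk5
open List
variable {A : Type*} {Θ : List A → List A}

lemma suffix_concat_struct {p v : List A} {a : A} (h : p <:+ v ++ [a]) (hne : p ≠ []) :
    ∃ q, p = q ++ [a] ∧ q <:+ v := by
  obtain ⟨x, hx⟩ := h
  rcases List.eq_nil_or_concat p with rfl | ⟨q, b, rfl⟩
  · exact absurd rfl hne
  · have h1 : (x ++ q) ++ [b] = v ++ [a] := by rw [← hx]; simp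
    obtain ⟨h3, h4⟩ := List.append_inj' h1 (by simp)
    have hb : b = a := by simpa using h4
    exact ⟨q, by rw [hb, List.concat_eq_append], ⟨x, h3⟩⟩

/-- If `p` is a new `Θ`-palindrome of `v ++ [a]` (not in `palSet Θ v`) and
`Θ [a] ≠ [a]`, then the pair of `a` already appears among the pairs of `v`. -/
lemma pair_mem_of_newpal (hΘ : IsAntimorphism Θ) {v p : List A} {a : A}
    (hpw : p ∈ palSet Θ (v ++ [a])) (hpv : p ∉ palSet Θ v) (hb2 : Θ [a] ≠ [a]) :
    ({b | [b] = [a] ∨ [b] = Θ [a]} : Set A) ∈ pairSet Θ v := by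
  obtain ⟨θ, hinv, hθ⟩ := exists_invol hΘ
  obtain ⟨hsuf, hpne, -, -⟩ := newpal hΘ hpw hpv
  obtain ⟨q, hpq, hqv⟩ := suffix_concat_struct hsuf hpne
  have hqne : q ≠ [] := by
    rintro rfl
    simp only [List.nil_append] at hpq
    rw [hpq] at hpw
    exact hb2 hpw.2
  obtain ⟨d, q', rfl⟩ := List.exists_cons_of_ne_nil hqne
  have hpal : Θ p = p := hpw.2
  have hform : p = θ a :: Θ (d :: q') := by
    conv_lhs => rw [← hpal, hpq, hΘ.1 (d :: q') [a], hθ a]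
    simp
  have hda : d = θ a := by
    rw [hpq] at hform
    exact (List.cons_eq_cons.mp hform).1
  have hdv : d ∈ v := hqv.subset List.mem_cons_self
  have hΘd : Θ [d] = [a] := by
    rw [hda, hθ (θ a), hinv]
  have hΘdne : Θ [d] ≠ [d] := by
    rw [hΘd, hda]
    intro h
    have : a = θ a := by simpa using h
    rw [hθ a, ← this] at hb2
    exact hb2 rfl
  refine ⟨d, hdv, hΘdne, ?_⟩
  rw [hΘd, hθ a, hda]
  ext x
  simp only [Set.mem_setOf_eq]
  exact or_comm

lemma defect_append_le (hΘ : IsAntimorphism Θ) (v : List A) (a : A) :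
    defect Θ v ≤ defect Θ (v ++ [a]) := by
  set w := v ++ [a] with hw
  have hvw : v <:+: w := (List.prefix_append v [a]).isInfix
  have hPsub : palSet Θ v ⊆ palSet Θ w := palSet_mono hvw
  have hlw : w.length = v.length + 1 := by simp [hw]
  by_cases hnew : ∀ p ∈ palSet Θ w, p ∈ palSet Θ v
  · have hPeq : palSet Θ w = palSet Θ v := subset_antisymm hnew hPsub
    have hG : (pairSet Θ w).ncard ≤ (pairSet Θ v).ncard + 1 := by
      have hsub2 : pairSet Θ w ⊆ insert {b | [b] = [a] ∨ [b] = Θ [a]} (pairSet Θ v) := by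
        rintro P ⟨b, hb, hb2, rfl⟩
        rcases List.mem_append.mp hb with h | h
        · exact Set.mem_insert_of_mem _ ⟨b, h, hb2, rfl⟩
        · rw [List.mem_singleton] at h; subst h; exact Set.mem_insert _ _
      calc (pairSet Θ w).ncard ≤ _ :=
            Set.ncard_le_ncard hsub2 ((pairSet_finite Θ v).insert _)
        _ ≤ _ := Set.ncard_insert_le _ _
    unfold defect
    rw [gammaTheta_eq, gammaTheta_eq, hPeq, hlw]
    omega
  · push_neg at hnew
    obtain ⟨p, hpw, hpv⟩ := hnew
    obtain ⟨hsuf, hpne, hoccset, hmax⟩ := newpal hΘ hpw hpv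
    have hG : pairSet Θ w ⊆ pairSet Θ v := by
      rintro P ⟨b, hb, hb2, rfl⟩
      rcases List.mem_append.mp hb with h | h
      · exact ⟨b, h, hb2, rfl⟩
      · rw [List.mem_singleton] at h; subst h
        exact pair_mem_of_newpal hΘ hpw hpv hb2
    have hGle : (pairSet Θ w).ncard ≤ (pairSet Θ v).ncard :=
      Set.ncard_le_ncard hG (pairSet_finite Θ v)
    have hP : (palSet Θ w).ncard ≤ (palSet Θ v).ncard + 1 := by
      have hsub2 : palSet Θ w ⊆ insert p (palSet Θ v) := by
        intro q hq
        by_cases hqv : q ∈ palSet Θ v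
        · exact Set.mem_insert_of_mem _ hqv
        · obtain ⟨hsq, hqne, hoccq, hmaxq⟩ := newpal hΘ hq hqv
          exact Set.mem_insert_iff.mpr (Or.inl
            (suffix_eq_of_length hsq hsuf
              (le_antisymm (hmaxq p hsuf hpw.2) (hmax q hsq hq.2)).symm))
      calc (palSet Θ w).ncard ≤ _ :=
            Set.ncard_le_ncard hsub2 ((palSet_finite Θ v).insert _)
        _ ≤ _ := Set.ncard_insert_le _ _
    unfold defect
    rw [gammaTheta_eq, gammaTheta_eq, hlw]
    omega

end Chunk5
section Chunk6
open List
variable {A : Type*} {Θ : List A → List A}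

lemma palSet_theta_subset (hΘ : IsAntimorphism Θ) (w : List A) :
    palSet Θ w ⊆ palSet Θ (Θ w) := by
  rintro p ⟨h1, h2⟩
  refine ⟨?_, h2⟩
  have := theta_infix hΘ h1
  rwa [h2] at this

lemma palSet_theta (hΘ : IsAntimorphism Θ) (w : List A) : palSet Θ (Θ w) = palSet Θ w := by
  apply subset_antisymm
  · have := palSet_theta_subset hΘ (Θ w)
    rwa [hΘ.2] at this
  · exact palSet_theta_subset hΘ w

lemma pairSet_theta_subset (hΘ : IsAntimorphism Θ) (w : List A) :
    pairSet Θ w ⊆ pairSet Θ (Θ w) := by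
  obtain ⟨θ, hinv, hθ⟩ := exists_invol hΘ
  rintro P ⟨b, hb, hb2, rfl⟩
  have hmem : θ b ∈ Θ w := (mem_theta_iff hΘ hθ hinv).mpr (by rwa [hinv b])
  have hΘθb : Θ [θ b] = [b] := by rw [hθ (θ b), hinv]
  have hne : Θ [θ b] ≠ [θ b] := by
    rw [hΘθb]
    intro h
    have hbe : b = θ b := by simpa using h
    rw [hθ b, ← hbe] at hb2
    exact hb2 rfl
  refine ⟨θ b, hmem, hne, ?_⟩
  rw [hΘθb, hθ b]
  ext x
  simp only [Set.mem_setOf_eq]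
  exact or_comm

lemma pairSet_theta (hΘ : IsAntimorphism Θ) (w : List A) : pairSet Θ (Θ w) = pairSet Θ w := by
  apply subset_antisymm
  · have := pairSet_theta_subset hΘ (Θ w)
    rwa [hΘ.2] at this
  · exact pairSet_theta_subset hΘ w

lemma defect_theta (hΘ : IsAntimorphism Θ) (w : List A) : defect Θ (Θ w) = defect Θ w := by
  unfold defect
  rw [gammaTheta_eq, gammaTheta_eq, palSet_theta hΘ, pairSet_theta hΘ, theta_length hΘ]

lemma defect_cons_le (hΘ : IsAntimorphism Θ) (v : List A) (a : A) :
    defect Θ v ≤ defect Θ (a :: v) := by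
  obtain ⟨θ, hinv, hθ⟩ := exists_invol hΘ
  have h1 : Θ (a :: v) = Θ v ++ [θ a] := by
    have := hΘ.1 [a] v
    simp only [List.singleton_append] at this
    rw [this, hθ a]
  calc defect Θ v = defect Θ (Θ v) := (defect_theta hΘ v).symm
    _ ≤ defect Θ (Θ v ++ [θ a]) := defect_append_le hΘ _ _
    _ = defect Θ (Θ (a :: v)) := by rw [h1]
    _ = defect Θ (a :: v) := defect_theta hΘ _

lemma defect_append_right (hΘ : IsAntimorphism Θ) (y : List A) :
    ∀ v, defect Θ v ≤ defect Θ (v ++ y) := by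
  induction y using List.reverseRecOn with
  | nil => intro v; simp
  | append_singleton ys a ih =>
    intro v
    calc defect Θ v ≤ defect Θ (v ++ ys) := ih v
      _ ≤ defect Θ ((v ++ ys) ++ [a]) := defect_append_le hΘ _ _
      _ = defect Θ (v ++ (ys ++ [a])) := by rw [List.append_assoc]

lemma defect_prepend (hΘ : IsAntimorphism Θ) (x : List A) :
    ∀ v, defect Θ v ≤ defect Θ (x ++ v) := by
  induction x with
  | nil => intro v; simp
  | cons a x ih =>
    intro v
    calc defect Θ v ≤ defect Θ (x ++ v) := ih v
      _ ≤ defect Θ (a :: (x ++ v)) := defect_cons_le hΘ _ _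
      _ = defect Θ ((a :: x) ++ v) := by rw [List.cons_append]

lemma defect_infix_mono (hΘ : IsAntimorphism Θ) {v w : List A} (h : v <:+: w) :
    defect Θ v ≤ defect Θ w := by
  obtain ⟨x, y, rfl⟩ := h
  calc defect Θ v ≤ defect Θ (v ++ y) := defect_append_right hΘ y v
    _ ≤ defect Θ (x ++ (v ++ y)) := defect_prepend hΘ x _
    _ = defect Θ (x ++ v ++ y) := by rw [List.append_assoc]

end Chunk6
section Chunk7
open List
variable {A : Type*} {u : ℕ → A}

lemma length_factorAt (u : ℕ → A) (i n : ℕ) : (factorAt u i n).length = n := by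
  simp [factorAt]

lemma factorAt_append (u : ℕ → A) (i m n : ℕ) :
    factorAt u i (m + n) = factorAt u i m ++ factorAt u (i + m) n := by
  unfold factorAt
  rw [List.range_add, List.map_append, List.map_map]
  congr 1
  apply List.map_congr_left
  intro k _
  simp only [Function.comp_apply]
  congr 1
  omega

lemma occursAt_factorAt (u : ℕ → A) (i n : ℕ) : OccursAt u (factorAt u i n) i := by
  unfold OccursAt
  rw [length_factorAt]

lemma isFactor_factorAt (u : ℕ → A) (i n : ℕ) : IsFactorOf (factorAt u i n) u :=
  ⟨i, occursAt_factorAt u i n⟩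

lemma factorAt_take (u : ℕ → A) (i n k : ℕ) :
    (factorAt u i n).take k = factorAt u i (min k n) := by
  unfold factorAt
  rw [← List.map_take, List.take_range]

lemma factorAt_drop (u : ℕ → A) (i n k : ℕ) :
    (factorAt u i n).drop k = factorAt u (i + k) (n - k) := by
  by_cases hk : k ≤ n
  · conv_lhs => rw [show n = k + (n - k) from by omega, factorAt_append]
    rw [List.drop_append_of_le_length (by rw [length_factorAt]),
      List.drop_eq_nil_of_le (by rw [length_factorAt]), List.nil_append]
  · rw [List.drop_eq_nil_of_le (by rw [length_factorAt]; omega),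
      show n - k = 0 from by omega]
    simp [factorAt]

lemma window_infix (u : ℕ → A) {i j m n : ℕ} (h1 : j ≤ i) (h2 : i + m ≤ j + n) :
    factorAt u i m <:+: factorAt u j n := by
  have hn : n = (i - j) + (m + (j + n - (i + m))) := by omega
  rw [hn, factorAt_append, factorAt_append, show j + (i - j) = i from by omega]
  exact ⟨factorAt u j (i - j), factorAt u (i + m) (j + n - (i + m)), by rw [List.append_assoc]⟩

lemma occursAt_infix {w : List A} {i j n : ℕ} (h : OccursAt u w i) (h1 : j ≤ i)
    (h2 : i + w.length ≤ j + n) : w <:+: factorAt u j n := by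
  have := window_infix u h1 (m := w.length) h2
  rwa [← h] at this

lemma infix_isFactor {w v : List A} (h : w <:+: v) (hv : IsFactorOf v u) :
    IsFactorOf w u := by
  obtain ⟨i, hi⟩ := hv
  obtain ⟨k, hk1, hk2⟩ := occursIn_of_infix h
  refine ⟨i + k, ?_⟩
  unfold OccursAt
  rw [hk2]
  conv_lhs => rw [hi]
  rw [factorAt_drop, factorAt_take]
  congr 1
  have h3 : (List.take w.length (List.drop k v)).length = w.length := by
    rw [← hk2]
  rw [h3]
  omega

end Chunk7
section Chunk8
open List
variable {A : Type*} {u : ℕ → A}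

lemma length_prefixWord (u : ℕ → A) (n : ℕ) : (prefixWord u n).length = n :=
  length_factorAt u 0 n

lemma prefixWord_succ (u : ℕ → A) (n : ℕ) :
    prefixWord u (n + 1) = prefixWord u n ++ [u n] := by
  unfold prefixWord
  rw [factorAt_append]
  congr 1; simp [factorAt, List.range_succ]

lemma isFactor_prefixWord (u : ℕ → A) (n : ℕ) : IsFactorOf (prefixWord u n) u :=
  isFactor_factorAt u 0 n

lemma factor_infix_prefixWord {w : List A} {i : ℕ} (h : OccursAt u w i) :
    w <:+: prefixWord u (i + w.length) :=
  occursAt_infix h (Nat.zero_le i) (by omega)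

lemma eventually_const (f : ℕ → ℤ) (hmono : ∀ n, f n ≤ f (n + 1)) {C : ℤ}
    (hC : ∀ n, f n ≤ C) : ∃ N, ∀ n, N ≤ n → f n = f N := by
  by_contra hcon
  push_neg at hcon
  have mono : Monotone f := monotone_nat_of_le_succ hmono
  have key : ∀ k : ℕ, ∃ n, f 0 + k ≤ f n := by
    intro k
    induction k with
    | zero => exact ⟨0, by simp⟩
    | succ k ih =>
      obtain ⟨n, hn⟩ := ih
      obtain ⟨n', hn', hne⟩ := hcon n
      have h1 : f n ≤ f n' := mono hn'
      have h2 : f n + 1 ≤ f n' := by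
        rcases lt_or_eq_of_le h1 with h | h
        · omega
        · exact absurd h.symm hne
      exact ⟨n', by push_cast; omega⟩
  obtain ⟨n, hn⟩ := key ((C - f 0).toNat + 1)
  have h1 := hC n
  have h2 : C - f 0 ≤ ((C - f 0).toNat : ℤ) := Int.self_le_toNat _
  push_cast at hn
  omega

end Chunk8
section Chunk9
open List
variable {A : Type*} {Θ : List A → List A} {u : ℕ → A}

lemma two_occ_not_uni {s r : List A} {i j : ℕ} (hi : OccursIn s r i) (hj : OccursIn s r j)
    (hij : i ≠ j) : ¬ Unioccurrent s r := by
  intro huni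
  have h2 : 1 < Set.ncard {k | OccursIn s r k} :=
    (Set.one_lt_ncard_iff (occursIn_finite s r)).mpr ⟨i, j, hi, hj, hij⟩
  rw [Unioccurrent] at huni
  omega

lemma backward_direction (hΘ : IsAntimorphism Θ) (u : ℕ → A) (H : ℕ)
    (hyp : ∀ w : List A, IsFactorOf w u → H < w.length →
      ∀ s : List A, s <:+ w → Θ s = s →
        (∀ t : List A, t <:+ w → Θ t = t → t.length ≤ s.length) →
        Unioccurrent s w) :
    FiniteDefect Θ u := by
  refine ⟨H, fun w hw => ?_⟩
  have main : ∀ k, k ≤ w.length → defect Θ (w.take k) ≤ min (k : ℤ) (H : ℤ) := by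
    intro k
    induction k with
    | zero =>
      intro _
      rw [List.take_zero, defect_nil hΘ]
      simp
    | succ k ih =>
      intro hk1
      have hkw : k < w.length := by omega
      have hkle := ih (le_of_lt hkw)
      have ha : w.take (k + 1) = w.take k ++ [w[k]] := by
        rw [← List.take_concat_get hkw, List.concat_eq_append]
      set v := w.take k with hv
      set w' := w.take (k + 1) with hw'
      have hlv : v.length = k := by rw [hv, List.length_take]; omega
      have hlw' : w'.length = k + 1 := by rw [hw', List.length_take]; omega
      have hvw' : v <:+: w' := by rw [ha]; exact (List.prefix_append v [w[k]]).isInfix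
      have hw'fac : IsFactorOf w' u := infix_isFactor (List.take_prefix (k+1) w).isInfix hw
      have h1 : gammaTheta Θ v ≤ gammaTheta Θ w' := gamma_mono Θ hvw'
      by_cases hcase : k < H
      · have h2 : (palSet Θ v).ncard ≤ (palSet Θ w').ncard :=
          Set.ncard_le_ncard (palSet_mono hvw') (palSet_finite Θ w')
        have hminA : min ((k : ℤ) + 1) (H : ℤ) = (k : ℤ) + 1 := by
          apply min_eq_left; exact_mod_cast hcase
        have hminB : min (k : ℤ) (H : ℤ) = (k : ℤ) := by
          apply min_eq_left; exact_mod_cast le_of_lt hcase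
        rw [hminB] at hkle
        unfold defect at hkle ⊢
        rw [hlw']
        rw [hlv] at hkle
        push_cast at hminA ⊢
        rw [hminA]
        omega
      · push_neg at hcase
        obtain ⟨s, hs1, hs2, hs3⟩ := exists_maximal_pal_suffix hΘ w'
        have huni : Unioccurrent s w' :=
          hyp w' hw'fac (by omega) s hs1 hs2 hs3
        have hsuffocc : OccursIn s w' (w'.length - s.length) := occursIn_suffix hs1
        have hsl : s.length ≤ w'.length := hs1.length_le
        have hsne : s ≠ [] := by
          rintro rfl
          have h0 : OccursIn ([] : List A) w' 0 := ⟨by simp, by simp⟩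
          have h1' : OccursIn ([] : List A) w' 1 := ⟨by simp [hlw'], by simp⟩
          exact two_occ_not_uni h0 h1' (by omega) huni
        have hsnempty : 0 < s.length := List.length_pos_iff.mpr hsne
        have hnotin : s ∉ palSet Θ v := by
          rintro ⟨hinf, -⟩
          obtain ⟨k0, hk0⟩ := occursIn_of_infix hinf
          have ho1 : OccursIn s w' k0 := by
            rw [ha]; exact occursIn_prefix hk0
          have hk0v : k0 + s.length ≤ v.length := hk0.1
          exact two_occ_not_uni ho1 hsuffocc (by omega) huni
        have hstep : (palSet Θ v).ncard + 1 ≤ (palSet Θ w').ncard := by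
          have hss : palSet Θ v ⊂ palSet Θ w' :=
            ⟨palSet_mono hvw', fun hsub => hnotin (hsub ⟨hs1.isInfix, hs2⟩)⟩
          have := Set.ncard_lt_ncard hss (palSet_finite Θ w')
          omega
        have hminA : min ((k : ℤ) + 1) (H : ℤ) = (H : ℤ) := by
          apply min_eq_right; exact_mod_cast (by omega : H ≤ k + 1)
        have hminB : min (k : ℤ) (H : ℤ) = (H : ℤ) := by
          apply min_eq_right; exact_mod_cast hcase
        rw [hminB] at hkle
        unfold defect at hkle ⊢
        rw [hlw']
        rw [hlv] at hkle
        push_cast at hminA ⊢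
        rw [hminA]
        omega
  have hfin := main w.length le_rfl
  rw [List.take_length] at hfin
  calc defect Θ w ≤ min (w.length : ℤ) (H : ℤ) := hfin
    _ ≤ (H : ℤ) := min_le_right _ _

end Chunk9
section Chunk10
open List
variable {A : Type*} [Fintype A] {Θ : List A → List A} {u : ℕ → A}

lemma forward_direction (hΘ : IsAntimorphism Θ) (u : ℕ → A)
    (hur : UniformlyRecurrent u) (hfd : FiniteDefect Θ u) :
    ∃ H : ℕ, 0 < H ∧
      ∀ w : List A, IsFactorOf w u → H < w.length →
        ∀ s : List A, s <:+ w → Θ s = s →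
          (∀ t : List A, t <:+ w → Θ t = t → t.length ≤ s.length) →
          Unioccurrent s w := by
  classical
  obtain ⟨C, hC⟩ := hfd
  set f : ℕ → ℤ := fun n => defect Θ (prefixWord u n) with hf
  have hfmono : ∀ n, f n ≤ f (n + 1) := by
    intro n
    simp only [hf]
    rw [prefixWord_succ]
    exact defect_append_le hΘ _ _
  have hfM' : Monotone f := monotone_nat_of_le_succ hfmono
  have hfbdd : ∀ n, f n ≤ C := fun n => hC _ (isFactor_prefixWord u n)
  obtain ⟨N1, hN1⟩ := eventually_const f hfmono hfbdd
  set g : ℕ → ℤ := fun n => (gammaTheta Θ (prefixWord u n) : ℤ) with hg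
  have hgmono : ∀ n, g n ≤ g (n + 1) := by
    intro n
    simp only [hg]
    have : prefixWord u n <:+: prefixWord u (n + 1) := by
      rw [prefixWord_succ]
      exact (List.prefix_append _ _).isInfix
    exact_mod_cast gamma_mono Θ this
  have hgM' : Monotone g := monotone_nat_of_le_succ hgmono
  have hgbdd : ∀ n, g n ≤ ((Set.univ : Set (Set A)).ncard : ℤ) := by
    intro n
    simp only [hg]
    exact_mod_cast Set.ncard_le_ncard (Set.subset_univ _) (Set.toFinite _)
  obtain ⟨N2, hN2⟩ := eventually_const g hgmono hgbdd
  set M := max N1 N2 with hM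
  have hfMe : ∀ n, M ≤ n → f n = f M := by
    intro n hn
    rw [hN1 n (le_trans (le_max_left _ _) hn), hN1 M (le_max_left _ _)]
  have hgMe : ∀ n, M ≤ n → g n = g M := by
    intro n hn
    rw [hN2 n (le_trans (le_max_right _ _) hn), hN2 M (le_max_right _ _)]
  set w0 := prefixWord u M with hw0
  have hw0M : w0.length = M := length_prefixWord u M
  have hDle : ∀ w : List A, IsFactorOf w u → defect Θ w ≤ f M := by
    rintro w ⟨i, hi⟩
    calc defect Θ w ≤ f (i + w.length) := defect_infix_mono hΘ (factor_infix_prefixWord hi)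
      _ ≤ f (max M (i + w.length)) := hfM' (le_max_right _ _)
      _ = f M := hfMe _ (le_max_left _ _)
  have hGle : ∀ w : List A, IsFactorOf w u → gammaTheta Θ w ≤ gammaTheta Θ w0 := by
    rintro w ⟨i, hi⟩
    have h1 : (gammaTheta Θ w : ℤ) ≤ g (i + w.length) := by
      simp only [hg]
      exact_mod_cast gamma_mono Θ (factor_infix_prefixWord hi)
    have h2 : g (i + w.length) ≤ g (max M (i + w.length)) := hgM' (le_max_right _ _)
    have h3 : g (max M (i + w.length)) = g M := hgMe _ (le_max_left _ _)
    have : (gammaTheta Θ w : ℤ) ≤ g M := by omega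
    simp only [hg] at this
    exact_mod_cast this
  obtain ⟨R, hR⟩ := hur w0 (isFactor_prefixWord u M)
  refine ⟨R + M + 1, by omega, ?_⟩
  intro w hwfac hlen s hs1 hs2 hs3
  obtain ⟨j, hj⟩ := hwfac
  obtain ⟨i, hi1, hi2, hiocc⟩ := hR j
  have hwne : w ≠ [] := by
    intro h
    rw [h] at hlen
    simp at hlen
  set a := w.getLast hwne with hadef
  set v := w.dropLast with hv
  have hva : v ++ [a] = w := List.dropLast_append_getLast hwne
  have hlv : v.length = w.length - 1 := by rw [hv, List.length_dropLast]
  have hvfac : v = factorAt u j (w.length - 1) := by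
    rw [hv, List.dropLast_eq_take]
    conv_lhs => rw [hj]
    rw [factorAt_take, length_factorAt]
    congr 1
    omega
  have hw0v : w0 <:+: v := by
    rw [hvfac]
    have h4 : w0 = factorAt u i M := by rw [← hw0M]; exact hiocc
    rw [h4]
    exact window_infix u (by omega) (by omega)
  have hvw : v <:+: w := by
    rw [← hva]
    exact (List.prefix_append v [a]).isInfix
  have hw0w : w0 <:+: w := hw0v.trans hvw
  have hvfacOf : IsFactorOf v u := by
    rw [hvfac]
    exact isFactor_factorAt u j (w.length - 1)
  have hwfacOf : IsFactorOf w u := ⟨j, hj⟩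
  have hDv : defect Θ v = f M :=
    le_antisymm (hDle v hvfacOf) (defect_infix_mono hΘ hw0v)
  have hDw : defect Θ w = f M :=
    le_antisymm (hDle w hwfacOf) (defect_infix_mono hΘ hw0w)
  have hGv : gammaTheta Θ v = gammaTheta Θ w0 :=
    le_antisymm (hGle v hvfacOf) (gamma_mono Θ hw0v)
  have hGw : gammaTheta Θ w = gammaTheta Θ w0 :=
    le_antisymm (hGle w hwfacOf) (gamma_mono Θ hw0w)
  have hlvw : w.length = v.length + 1 := by
    rw [← hva]
    simp
  have hPsub : palSet Θ v ⊆ palSet Θ w := palSet_mono hvw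
  have hncard : (palSet Θ w).ncard = (palSet Θ v).ncard + 1 := by
    have e1 : defect Θ w = defect Θ v := by omega
    unfold defect at e1
    rw [hlvw] at e1
    rw [hGv, hGw] at e1
    omega
  have hex : ∃ p, p ∈ palSet Θ w ∧ p ∉ palSet Θ v := by
    by_contra h
    push_neg at h
    have heq : palSet Θ w = palSet Θ v := subset_antisymm h hPsub
    rw [heq] at hncard
    omega
  obtain ⟨p, hpw, hpv⟩ := hex
  rw [← hva] at hs1 hs3 hpw ⊢
  obtain ⟨hpsuf, hpne, hoccset, hmax⟩ := newpal hΘ hpw hpv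
  have hps : s = p :=
    suffix_eq_of_length hs1 hpsuf
      (le_antisymm (hmax s hs1 hs2) (hs3 p hpsuf hpw.2))
  rw [Unioccurrent, hps, hoccset]
  exact Set.ncard_singleton _

end Chunk10
/-- **Proposition 7, second equivalence.** A uniformly recurrent word with
language closed under `Θ` has finite `Θ`-defect iff there is a positive integer
`H` such that for every factor `w` longer than `H` the longest `Θ`-palindromic
suffix of `w` is unioccurrent in `w`. -/
theorem finiteDefect_iff_longest_palindromic_suffix_unioccurrent
    {A : Type*} [Fintype A] (Θ : List A → List A) (hΘ : IsAntimorphism Θ)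
    (u : ℕ → A) (hur : UniformlyRecurrent u) (hcl : LangClosedUnder Θ u) :
    FiniteDefect Θ u ↔ ∃ H : ℕ, 0 < H ∧
      ∀ w : List A, IsFactorOf w u → H < w.length →
        ∀ s : List A, s <:+ w → Θ s = s →
          (∀ t : List A, t <:+ w → Θ t = t → t.length ≤ s.length) →
          Unioccurrent s w := by
  constructor
  · intro hfd
    exact forward_direction hΘ u hur hfd
  · rintro ⟨H, -, hyp⟩
    exact backward_direction hΘ u H hyp
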